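/- arXiv:2605.24572 — 4 statements merged into one kernel-verified Lean document; each statement's English description precedes it below -/
import Mathlib

section
/- Let λ₁ ≥ λ₂ ≥ 0 be integers and H_m(z,w) = Σ_{i+j=m, i,j≥0} z^i w^j (with H_m = 0 for m < 0). Then H_{λ₁}(z,w)·H_{λ₂}(z,w) − H_{λ₁+1}(z,w)·H_{λ₂−1}(z,w) = Σ_{k=λ₂}^{λ₁} z^{λ₁+λ₂−k} w^{k}. -/
/-!
Peeling off the top monomial, `H_{m+1} = z H_m + w^{m+1}`, collapses the left-hand side to
`H_{λ₁} w^{λ₂} − w^{λ₁+1} H_{λ₂−1}`. Each product `H_m w^j` is the block of monomials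
`z^{m+j−k} w^k` with `j ≤ k ≤ m + j`; here both blocks have degree `λ₁ + λ₂` and share their top
end, so their difference is the block `λ₂ ≤ k ≤ λ₁`.
-/

open Finset

section CompleteHomogeneous

variable {R : Type*}

def completeHomogeneous₂ [CommSemiring R] (z w : R) (m : ℕ) : R :=
  ∑ i ∈ range (m + 1), z ^ i * w ^ (m - i)

variable [CommSemiring R] (z w : R)

@[simp]
theorem completeHomogeneous₂_zero : completeHomogeneous₂ z w 0 = 1 := by
  simp [completeHomogeneous₂]

theorem completeHomogeneous₂_eq_sum_pow_mul_pow (m : ℕ) :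
    completeHomogeneous₂ z w m = ∑ k ∈ range (m + 1), z ^ (m - k) * w ^ k := by
  rw [completeHomogeneous₂, ← sum_range_reflect]
  refine sum_congr rfl fun k hk => ?_
  rw [mem_range] at hk
  rw [show m + 1 - 1 - k = m - k by omega, show m - (m - k) = k by omega]

theorem completeHomogeneous₂_succ (m : ℕ) :
    completeHomogeneous₂ z w (m + 1) = z * completeHomogeneous₂ z w m + w ^ (m + 1) := by
  rw [completeHomogeneous₂, sum_range_succ', completeHomogeneous₂, mul_sum]
  congr 1
  · refine sum_congr rfl fun i _ => ?_
    rw [pow_succ', Nat.add_sub_add_right, mul_assoc]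
  · simp

theorem completeHomogeneous₂_mul_pow (m j : ℕ) :
    completeHomogeneous₂ z w m * w ^ j
      = ∑ k ∈ Ico j (m + j + 1), z ^ (m + j - k) * w ^ k := by
  rw [completeHomogeneous₂_eq_sum_pow_mul_pow, sum_mul, sum_Ico_eq_sum_range,
    show m + j + 1 - j = m + 1 by omega]
  refine sum_congr rfl fun k _ => ?_
  rw [mul_assoc, ← pow_add, show m + j - (j + k) = m - k by omega, add_comm k j]

end CompleteHomogeneous

theorem completeHomogeneous₂_mul_succ_sub_succ_mul {R : Type*} [CommRing R] (z w : R)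
    {a b : ℕ} (hba : b ≤ a) :
    completeHomogeneous₂ z w a * completeHomogeneous₂ z w (b + 1)
        - completeHomogeneous₂ z w (a + 1) * completeHomogeneous₂ z w b
      = ∑ k ∈ Ico (b + 1) (a + 1), z ^ (a + b + 1 - k) * w ^ k := by
  have hcollapse :
      completeHomogeneous₂ z w a * completeHomogeneous₂ z w (b + 1)
          - completeHomogeneous₂ z w (a + 1) * completeHomogeneous₂ z w b
        = completeHomogeneous₂ z w a * w ^ (b + 1)
          - completeHomogeneous₂ z w b * w ^ (a + 1) := by
    rw [completeHomogeneous₂_succ, completeHomogeneous₂_succ]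
    ring
  rw [hcollapse, completeHomogeneous₂_mul_pow, completeHomogeneous₂_mul_pow,
    show b + (a + 1) = a + b + 1 by omega, show a + (b + 1) = a + b + 1 by omega,
    ← sum_Ico_consecutive _ (by omega : b + 1 ≤ a + 1) (by omega : a + 1 ≤ a + b + 1 + 1),
    add_sub_cancel_right]

/-- Jacobi–Trudi in two variables: `H_{λ₁}H_{λ₂} − H_{λ₁+1}H_{λ₂−1}
= ∑_{k=λ₂}^{λ₁} z^{λ₁+λ₂−k} w^k`, where `H_m(z,w) = ∑_{i=0}^m z^i w^{m−i}`
and `H_{-1} = 0`. -/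
theorem stmt1 {R : Type*} [CommRing R] (z w : R) (l1 l2 : ℕ) (h : l2 ≤ l1)
    (H : ℕ → R) (hH : ∀ m, H m = ∑ i ∈ Finset.range (m + 1), z ^ i * w ^ (m - i)) :
    H l1 * H l2 - (if l2 = 0 then 0 else H (l1 + 1) * H (l2 - 1))
      = ∑ k ∈ Finset.Icc l2 l1, z ^ (l1 + l2 - k) * w ^ k := by
  obtain rfl : H = completeHomogeneous₂ z w := funext hH
  rw [← Ico_add_one_right_eq_Icc]
  rcases l2 with _ | n
  · simpa using completeHomogeneous₂_mul_pow z w l1 0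
  · rw [if_neg n.succ_ne_zero, Nat.add_sub_cancel, ← add_assoc]
    exact completeHomogeneous₂_mul_succ_sub_succ_mul z w (by omega)
end

section
/- Let f(T) = a₀ + ⋯ + a_dT^d have nonnegative real coefficients, and set p(z,w) = f(z)f(w). Then p(z,w) is Schur positive (i.e., a nonnegative linear combination of two-variable Schur polynomials S_{(λ₁,λ₂)}) if and only if f is log-concave and has no internal zeros. -/
/-!
The coefficient of `z^i w^j` in `∑ c_λ S_λ` is `∑_{n ≤ min i j} c_{(i+j-n, n)}`. Comparing it with
the coefficient `a_i a_j` of `f(z) f(w)` forces `c_{(m,n)} = a_m a_n - a_{m+1} a_{n-1}`, and this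
choice does telescope. So `f(z) f(w)` is Schur positive exactly when `a_{m+1} a_{n-1} ≤ a_m a_n`
for `1 ≤ n ≤ m`, i.e. when `a` is a Pólya frequency sequence of order 2. For a nonnegative sequence
this is log-concavity without internal zeros: along a run of positive terms the inequality is a
product of consecutive log-concavity inequalities, and applied at the last nonzero term before a
zero it kills every later term.
-/

open Finset

def schur2 (p : ℕ × ℕ) (z w : ℝ) : ℝ :=
  ∑ k ∈ Icc p.2 p.1, z ^ (p.1 + p.2 - k) * w ^ k

def bivariateSum (N : ℕ) (g : ℕ → ℕ → ℝ) (z w : ℝ) : ℝ :=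
  ∑ i ∈ range N, ∑ j ∈ range N, g i j * z ^ i * w ^ j

lemma eq_of_forall_sum_mul_pow_eq {N : ℕ} {b b' : ℕ → ℝ}
    (h : ∀ z : ℝ, ∑ i ∈ range N, b i * z ^ i = ∑ i ∈ range N, b' i * z ^ i) :
    ∀ i < N, b i = b' i := by
  have hP : ∑ i ∈ range N, Polynomial.C (b i) * Polynomial.X ^ i
      = ∑ i ∈ range N, Polynomial.C (b' i) * Polynomial.X ^ i :=
    Polynomial.funext fun z => by simpa [Polynomial.eval_finsetSum] using h z
  intro i hi
  simpa [Polynomial.finsetSum_coeff, Polynomial.coeff_C_mul_X_pow, hi] using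
    congrArg (Polynomial.coeff · i) hP

lemma bivariateSum_eq_sum_mul_pow (N : ℕ) (g : ℕ → ℕ → ℝ) (z w : ℝ) :
    bivariateSum N g z w = ∑ i ∈ range N, (∑ j ∈ range N, g i j * w ^ j) * z ^ i := by
  simp only [bivariateSum, sum_mul, mul_right_comm]

lemma eq_of_forall_bivariateSum_eq {N : ℕ} {g g' : ℕ → ℕ → ℝ}
    (h : ∀ z w, bivariateSum N g z w = bivariateSum N g' z w) :
    ∀ i < N, ∀ j < N, g i j = g' i j := by
  intro i hi
  refine eq_of_forall_sum_mul_pow_eq fun w => ?_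
  refine eq_of_forall_sum_mul_pow_eq (b := fun i => ∑ j ∈ range N, g i j * w ^ j)
    (b' := fun i => ∑ j ∈ range N, g' i j * w ^ j) (fun z => ?_) i hi
  simpa only [bivariateSum_eq_sum_mul_pow] using h z w

lemma sum_mul_sum_eq_bivariateSum {d N : ℕ} {a : ℕ → ℝ} (hdeg : ∀ k, d < k → a k = 0)
    (hN : d < N) (z w : ℝ) :
    (∑ k ∈ range (d + 1), a k * z ^ k) * (∑ k ∈ range (d + 1), a k * w ^ k)
      = bivariateSum N (fun i j => a i * a j) z w := by
  have extend (v : ℝ) : ∑ k ∈ range (d + 1), a k * v ^ k = ∑ k ∈ range N, a k * v ^ k :=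
    sum_subset (range_subset_range.2 hN) fun k _ hk => by
      rw [hdeg k (by simpa using hk), zero_mul]
  rw [extend, extend, sum_mul_sum, bivariateSum]
  exact sum_congr rfl fun i _ => sum_congr rfl fun j _ => by ring

lemma schur2_eq_bivariateSum {p : ℕ × ℕ} {N : ℕ} (hN : p.1 < N) (z w : ℝ) :
    schur2 p z w = bivariateSum N
      (fun i j => if p.2 ≤ i ∧ p.2 ≤ j ∧ p.1 + p.2 = i + j then 1 else 0) z w := by
  have inner (j : ℕ) : ∑ i ∈ range N,
      (if p.2 ≤ i ∧ p.2 ≤ j ∧ p.1 + p.2 = i + j then 1 else 0) * z ^ i * w ^ j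
        = if j ∈ Icc p.2 p.1 then z ^ (p.1 + p.2 - j) * w ^ j else 0 := by
    split_ifs with hj
    · rw [mem_Icc] at hj
      rw [sum_eq_single (p.1 + p.2 - j)]
      · rw [if_pos (by omega), one_mul]
      · intro i _ hi
        rw [if_neg (by omega), zero_mul, zero_mul]
      · intro h
        exact absurd (mem_range.2 (by omega)) h
    · refine sum_eq_zero fun i _ => ?_
      rw [if_neg (fun h => hj (mem_Icc.2 (by omega))), zero_mul, zero_mul]
  rw [bivariateSum, sum_comm, sum_congr rfl fun j _ => inner j, sum_ite_mem,
    inter_eq_right.2 fun k hk => mem_range.2 (by rw [mem_Icc] at hk; omega), schur2]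

def monomialCoeff (c : ℕ × ℕ → ℝ) (i j : ℕ) : ℝ :=
  ∑ n ∈ range (min i j + 1), c (i + j - n, n)

lemma monomialCoeff_eq_sum_filter {F : Finset (ℕ × ℕ)} {c : ℕ × ℕ → ℝ}
    (hc : ∀ p, p.2 ≤ p.1 → p ∉ F → c p = 0) (i j : ℕ) :
    monomialCoeff c i j = ∑ p ∈ F with p.2 ≤ i ∧ p.2 ≤ j ∧ p.1 + p.2 = i + j, c p := by
  have hinj : Set.InjOn (fun n => (i + j - n, n)) (range (min i j + 1)) :=
    fun n _ n' _ h => congrArg Prod.snd h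
  rw [monomialCoeff, ← sum_image (f := c) hinj]
  symm
  refine sum_subset (fun p hp => ?_) (fun p hp hpF => ?_)
  · simp only [mem_filter] at hp
    exact mem_image.2 ⟨p.2, mem_range.2 (by omega), Prod.ext (by simp; omega) rfl⟩
  · obtain ⟨n, hn, rfl⟩ := mem_image.1 hp
    rw [mem_range] at hn
    exact hc _ (by simp; omega) fun h => hpF (mem_filter.2 ⟨h, by simp; omega⟩)

lemma sum_mul_schur2_eq_bivariateSum {F : Finset (ℕ × ℕ)} {c : ℕ × ℕ → ℝ} {N : ℕ}
    (hF : ∀ p ∈ F, p.1 < N) (hc : ∀ p, p.2 ≤ p.1 → p ∉ F → c p = 0) (z w : ℝ) :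
    ∑ p ∈ F, c p * schur2 p z w = bivariateSum N (monomialCoeff c) z w := by
  rw [sum_congr rfl fun p hp => by rw [schur2_eq_bivariateSum (hF p hp) z w]]
  simp only [bivariateSum, mul_sum, monomialCoeff_eq_sum_filter hc, sum_filter]
  rw [sum_comm]
  refine sum_congr rfl fun i _ => ?_
  rw [sum_comm]
  refine sum_congr rfl fun j _ => ?_
  rw [sum_mul, sum_mul]
  refine sum_congr rfl fun p _ => ?_
  split_ifs <;> ring

lemma monomialCoeff_comm (c : ℕ × ℕ → ℝ) (i j : ℕ) :
    monomialCoeff c i j = monomialCoeff c j i := by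
  unfold monomialCoeff
  rw [min_comm, add_comm i j]

lemma monomialCoeff_succ_right (c : ℕ × ℕ → ℝ) {i j : ℕ} (hji : j < i) :
    monomialCoeff c i (j + 1) = monomialCoeff c (i + 1) j + c (i, j + 1) := by
  rw [monomialCoeff, monomialCoeff, min_eq_right (by omega), min_eq_right (by omega),
    sum_range_succ, Nat.add_sub_cancel]
  exact congrArg (· + _) (sum_congr rfl fun n _ => by congr 2; omega)

def productSchurCoeff (a : ℕ → ℝ) : ℕ × ℕ → ℝ
  | (m, 0) => a m * a 0
  | (m, n + 1) => a m * a (n + 1) - a (m + 1) * a n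

lemma monomialCoeff_productSchurCoeff (a : ℕ → ℝ) (i j : ℕ) :
    monomialCoeff (productSchurCoeff a) i j = a i * a j := by
  wlog hji : j ≤ i generalizing i j
  · rw [monomialCoeff_comm, this j i (by omega), mul_comm]
  induction j generalizing i with
  | zero => simp [monomialCoeff, productSchurCoeff]
  | succ j ih =>
    rw [monomialCoeff_succ_right _ hji, ih (i + 1) (by omega), productSchurCoeff]
    ring

/-- Pólya frequency of order 2: the `2 × 2` minors of the Toeplitz matrix `(a (i - j))` are
nonnegative. -/
def IsPF2 (a : ℕ → ℝ) : Prop :=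
  ∀ i j, j < i → a (i + 1) * a j ≤ a i * a (j + 1)

lemma IsPF2.logConcave {a : ℕ → ℝ} (h : IsPF2 a) (i : ℕ) (hi : 1 ≤ i) :
    a (i - 1) * a (i + 1) ≤ a i ^ 2 := by
  obtain ⟨k, rfl⟩ : ∃ k, i = k + 1 := ⟨i - 1, by omega⟩
  simpa [sq, mul_comm] using h (k + 1) k k.lt_succ_self

lemma exists_le_lt_and_not_succ {p : ℕ → Prop} {i j : ℕ} (hij : i < j) (hi : p i) (hj : ¬ p j) :
    ∃ l, i ≤ l ∧ l < j ∧ p l ∧ ¬ p (l + 1) := by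
  induction j, hij using Nat.le_induction with
  | base => exact ⟨i, le_rfl, i.lt_succ_self, hi, hj⟩
  | succ j _ ih =>
    by_cases hpj : p j
    · exact ⟨j, by omega, j.lt_succ_self, hpj, hj⟩
    · obtain ⟨l, hil, hlj, hl, hl'⟩ := ih hpj
      exact ⟨l, hil, by omega, hl, hl'⟩

lemma IsPF2.not_exists_internal_zero {a : ℕ → ℝ} (hnn : ∀ k, 0 ≤ a k) (h : IsPF2 a) :
    ¬ ∃ i j k : ℕ, i < j ∧ j < k ∧ a i ≠ 0 ∧ a j = 0 ∧ a k ≠ 0 := by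
  rintro ⟨i, j, k, hij, hjk, hi, hj, hk⟩
  obtain ⟨l, -, hlj, hl, hl'⟩ :=
    exists_le_lt_and_not_succ (p := fun t => a t ≠ 0) hij hi (not_not.2 hj)
  obtain ⟨m, rfl⟩ : ∃ m, k = m + 1 := ⟨k - 1, by omega⟩
  have hle := h m l (by omega)
  rw [not_not.1 hl', mul_zero] at hle
  exact (mul_pos ((hnn _).lt_of_ne' hk) ((hnn l).lt_of_ne' hl)).not_ge hle

lemma mul_le_mul_of_logConcave {a : ℕ → ℝ} (hnn : ∀ k, 0 ≤ a k)
    (hlc : ∀ i : ℕ, 1 ≤ i → a (i - 1) * a (i + 1) ≤ a i ^ 2) {i j : ℕ} (hji : j ≤ i)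
    (hpos : ∀ t, j ≤ t → t < i → 0 < a t) :
    a (i + 1) * a j ≤ a i * a (j + 1) := by
  induction i, hji using Nat.le_induction with
  | base => rw [mul_comm]
  | succ i hji ih =>
    have hlci : a i * a (i + 2) ≤ a (i + 1) ^ 2 := by simpa using hlc (i + 1) (by omega)
    have hai : 0 < a i := hpos i hji i.lt_succ_self
    have ih' := ih fun t ht hti => hpos t ht (by omega)
    refine le_of_mul_le_mul_left ?_ hai
    nlinarith [mul_le_mul_of_nonneg_right hlci (hnn j),
      mul_le_mul_of_nonneg_left ih' (hnn (i + 1))]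

lemma isPF2_of_logConcave {d : ℕ} {a : ℕ → ℝ} (hnn : ∀ k, 0 ≤ a k)
    (hdeg : ∀ k, d < k → a k = 0) (hlc : ∀ i : ℕ, 1 ≤ i → a (i - 1) * a (i + 1) ≤ a i ^ 2)
    (hniz : ¬ ∃ i j k : ℕ, i < j ∧ j < k ∧ k ≤ d ∧ a i ≠ 0 ∧ a j = 0 ∧ a k ≠ 0) :
    IsPF2 a := by
  intro i j hji
  by_cases hi : a (i + 1) = 0
  · rw [hi, zero_mul]; exact mul_nonneg (hnn _) (hnn _)
  by_cases hj : a j = 0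
  · rw [hj, mul_zero]; exact mul_nonneg (hnn _) (hnn _)
  have hid : i + 1 ≤ d := by_contra fun h => hi (hdeg _ (by omega))
  refine mul_le_mul_of_logConcave hnn hlc hji.le fun t hjt hti => (hnn t).lt_of_ne' ?_
  rcases hjt.eq_or_lt with rfl | hjt
  · exact hj
  · exact fun ht => hniz ⟨j, t, i + 1, hjt, by omega, hid, hj, ht, hi⟩

lemma isPF2_of_schurPositive {d : ℕ} {a : ℕ → ℝ} (hnn : ∀ k, 0 ≤ a k)
    (hdeg : ∀ k, d < k → a k = 0) {F : Finset (ℕ × ℕ)} {c : ℕ × ℕ → ℝ}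
    (hc : ∀ p ∈ F, 0 ≤ c p)
    (hid : ∀ z w : ℝ, (∑ k ∈ range (d + 1), a k * z ^ k) * (∑ k ∈ range (d + 1), a k * w ^ k)
      = ∑ p ∈ F, c p * schur2 p z w) :
    IsPF2 a := by
  set N := F.sup Prod.fst + d + 1
  set c' : ℕ × ℕ → ℝ := fun p => if p ∈ F then c p else 0
  have hc' (p : ℕ × ℕ) : 0 ≤ c' p := by
    by_cases hp : p ∈ F
    · simpa [c', hp] using hc p hp
    · simp [c', hp]
  have hcoeff : ∀ i < N, ∀ j < N, a i * a j = monomialCoeff c' i j := by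
    refine eq_of_forall_bivariateSum_eq fun z w => ?_
    have hF (p : ℕ × ℕ) (hp : p ∈ F) : p.1 < N := Nat.lt_succ_of_le (le_add_right (le_sup hp))
    rw [← sum_mul_sum_eq_bivariateSum hdeg (by omega), hid,
      ← sum_mul_schur2_eq_bivariateSum hF fun p _ hp => if_neg hp]
    exact sum_congr rfl fun p hp => by rw [if_pos hp]
  intro i j hji
  by_cases hi : i + 1 < N
  · rw [hcoeff _ hi _ (by omega), hcoeff _ (by omega) _ (by omega),
      monomialCoeff_succ_right _ hji]
    exact le_add_of_nonneg_right (hc' _)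
  · rw [hdeg (i + 1) (by omega), zero_mul]
    exact mul_nonneg (hnn _) (hnn _)

lemma productSchurCoeff_nonneg {a : ℕ → ℝ} (hnn : ∀ k, 0 ≤ a k) (h : IsPF2 a) :
    ∀ p : ℕ × ℕ, p.2 ≤ p.1 → 0 ≤ productSchurCoeff a p
  | (m, 0), _ => mul_nonneg (hnn m) (hnn 0)
  | (m, n + 1), hp => sub_nonneg.2 (h m n hp)

lemma schurPositive_of_isPF2 {d : ℕ} {a : ℕ → ℝ} (hnn : ∀ k, 0 ≤ a k)
    (hdeg : ∀ k, d < k → a k = 0) (h : IsPF2 a) :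
    ∃ (F : Finset (ℕ × ℕ)) (c : ℕ × ℕ → ℝ), (∀ p ∈ F, p.2 ≤ p.1) ∧ (∀ p ∈ F, 0 ≤ c p) ∧
      ∀ z w : ℝ, (∑ k ∈ range (d + 1), a k * z ^ k) * (∑ k ∈ range (d + 1), a k * w ^ k)
        = ∑ p ∈ F, c p * schur2 p z w := by
  set F := (range (d + 1) ×ˢ range (d + 1)).filter fun p => p.2 ≤ p.1
  have hvanish (p : ℕ × ℕ) (hp : p.2 ≤ p.1) (hpF : p ∉ F) : productSchurCoeff a p = 0 := by
    obtain ⟨m, n⟩ := p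
    have hm : d < m := by simp only [F, mem_filter, mem_product, mem_range] at hpF; omega
    cases n <;> simp [productSchurCoeff, hdeg m hm, hdeg (m + 1) (by omega)]
  refine ⟨F, productSchurCoeff a, fun p hp => (mem_filter.1 hp).2,
    fun p hp => productSchurCoeff_nonneg hnn h p (mem_filter.1 hp).2, fun z w => ?_⟩
  have hF (p : ℕ × ℕ) (hp : p ∈ F) : p.1 < d + 1 := by
    simp only [F, mem_filter, mem_product, mem_range] at hp; exact hp.1.1
  rw [sum_mul_sum_eq_bivariateSum hdeg d.lt_succ_self, sum_mul_schur2_eq_bivariateSum hF hvanish,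
    funext₂ (monomialCoeff_productSchurCoeff a)]

/-- `f(z)f(w)` is Schur positive (a nonnegative combination of two-variable Schur
polynomials `S_{(λ₁,λ₂)}(z,w) = ∑_{k=λ₂}^{λ₁} z^{λ₁+λ₂−k} w^k`) iff the coefficient
sequence of `f` is log-concave with no internal zeros. -/
theorem stmt3 (d : ℕ) (a : ℕ → ℝ) (hnn : ∀ k, 0 ≤ a k)
    (hdeg : ∀ k, d < k → a k = 0) :
    (∃ (F : Finset (ℕ × ℕ)) (c : ℕ × ℕ → ℝ),
        (∀ p ∈ F, p.2 ≤ p.1) ∧ (∀ p ∈ F, 0 ≤ c p) ∧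
        ∀ z w : ℝ,
          (∑ k ∈ Finset.range (d + 1), a k * z ^ k) *
            (∑ k ∈ Finset.range (d + 1), a k * w ^ k)
          = ∑ p ∈ F, c p * ∑ k ∈ Finset.Icc p.2 p.1, z ^ (p.1 + p.2 - k) * w ^ k)
      ↔ ((∀ i : ℕ, 1 ≤ i → a (i - 1) * a (i + 1) ≤ a i ^ 2) ∧
          ¬ ∃ i j k : ℕ, i < j ∧ j < k ∧ k ≤ d ∧ a i ≠ 0 ∧ a j = 0 ∧ a k ≠ 0) := by
  constructor
  · rintro ⟨F, c, -, hc, hid⟩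
    have h := isPF2_of_schurPositive hnn hdeg hc hid
    exact ⟨h.logConcave, fun ⟨i, j, k, hij, hjk, _, hi, hj, hk⟩ =>
      h.not_exists_internal_zero hnn ⟨i, j, k, hij, hjk, hi, hj, hk⟩⟩
  · rintro ⟨hlc, hniz⟩
    exact schurPositive_of_isPF2 hnn hdeg (isPF2_of_logConcave hnn hdeg hlc hniz)
end

section
/- The coefficients of (1 + T + ⋯ + T^d)^p are log-concave and have no internal zeros; that is, if (1+T+⋯+T^d)^p = Σ_{k=0}^{dp} a_k T^k, then a_k > 0 for all 0 ≤ k ≤ dp and a_k² ≥ a_{k−1}a_{k+1} for all 1 ≤ k ≤ dp−1. -/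
/-!
Log-concavity in the four-point form `a w * a z ≤ a x * a y` (for `w ≤ x ≤ y ≤ z`,
`w + z = x + y`) says that all `2 × 2` minors of the Toeplitz matrix `(a (i - j))` are
nonnegative, so by Binet–Cauchy it passes to convolutions, i.e. to products of Laurent
polynomials. The coefficients of `1 + T + ⋯ + T^d` form the indicator of an interval, which has
this property, hence so do those of its powers. Positivity holds because for polynomials with
nonnegative coefficients `coeff (P * Q) (i + j) ≥ coeff P i * coeff Q j`.
-/

open Finset Polynomial LaurentPolynomial

variable {R : Type*}

/-- Binet–Cauchy for a `2 × s` matrix times an `s × 2` matrix. -/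
theorem Finset.two_mul_sum_mul_sum_sub_sum_mul_sum {ι : Type*} [CommRing R] (s : Finset ι)
    (u v β γ : ι → R) :
    2 * ((∑ i ∈ s, u i * β i) * (∑ j ∈ s, v j * γ j)
        - (∑ i ∈ s, v i * β i) * (∑ j ∈ s, u j * γ j))
      = ∑ i ∈ s, ∑ j ∈ s, (u i * v j - v i * u j) * (β i * γ j - β j * γ i) := by
  set g : ι → ι → R := fun i j => u i * β i * (v j * γ j) - v i * β i * (u j * γ j)
  have hg : (∑ i ∈ s, u i * β i) * (∑ j ∈ s, v j * γ j)
        - (∑ i ∈ s, v i * β i) * (∑ j ∈ s, u j * γ j)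
      = ∑ i ∈ s, ∑ j ∈ s, g i j := by
    simp only [g, sum_mul_sum, ← sum_sub_distrib]
  calc _ = ∑ i ∈ s, ∑ j ∈ s, g i j + ∑ i ∈ s, ∑ j ∈ s, g j i := by
        rw [hg, sum_comm (f := fun j i => g i j), two_mul]
    _ = _ := by
      simp only [← sum_add_distrib]
      exact sum_congr rfl fun i _ => sum_congr rfl fun j _ => by simp only [g]; ring

theorem LaurentPolynomial.coeff_one_eq_indicator [Semiring R] :
    ⇑(1 : R[T;T⁻¹]).coeff = ({0} : Set ℤ).indicator 1 := by
  ext j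
  rw [← T_zero, T_apply]
  simp [Set.indicator, eq_comm]

section LogConcave

variable [CommRing R] [LinearOrder R]

/-- For a nonnegative sequence without internal zeros this is equivalent to
`f (k - 1) * f (k + 1) ≤ f k ^ 2`; unlike that form it is stable under convolution. -/
def IsLogConcave (f : ℤ → R) : Prop :=
  ∀ w x y z : ℤ, w + z = x + y → w ≤ x → x ≤ y → y ≤ z → f w * f z ≤ f x * f y

variable {f a b : ℤ → R}

theorem IsLogConcave.mul_le_mul_of_add_eq (hf : IsLogConcave f) {w x y z : ℤ}
    (h : w + z = x + y) (hx : w ≤ x) (hy : w ≤ y) : f w * f z ≤ f x * f y := by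
  rcases le_total x y with hxy | hyx
  · exact hf w x y z h hx hxy (by omega)
  · rw [mul_comm (f x)]
    exact hf w y x z (by omega) hy hyx (by omega)

theorem IsLogConcave.mul_le_sq (hf : IsLogConcave f) (k : ℤ) :
    f (k - 1) * f (k + 1) ≤ f k ^ 2 :=
  sq (f k) ▸ hf _ _ _ _ (by ring) (by omega) le_rfl (by omega)

variable [IsStrictOrderedRing R]

theorem IsLogConcave.convolution (s : Finset ℤ) (has : ∀ k ∉ s, a k = 0)
    (ha : IsLogConcave a) (hb : IsLogConcave b) :
    IsLogConcave fun x => ∑ k ∈ s, a k * b (x - k) := by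
  intro w x y z hsum hwx hxy hyz
  set δ := x - w
  set t := s ∪ s.map (addRightEmbedding δ)
  -- Over `t`, the sums at `w` and `y` become sums of `a (k - δ) * b (x - k)` and
  -- `a (k - δ) * b (z - k)`, which puts the four sums in the shape of Binet–Cauchy.
  have extend : ∀ n, ∑ k ∈ s, a k * b (n - k) = ∑ k ∈ t, a k * b (n - k) := fun n =>
    sum_subset subset_union_left fun k _ hk => by rw [has k hk, zero_mul]
  have shift : ∀ n, ∑ k ∈ s, a k * b (n - k) = ∑ k ∈ t, a (k - δ) * b (n + δ - k) := by
    intro n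
    rw [← sum_subset subset_union_right, sum_map]
    · simp
    · intro k _ hk
      rw [has (k - δ) fun hk' => hk (mem_map.2 ⟨k - δ, hk', by simp⟩), zero_mul]
  have minors_nonneg : ∀ i j, i ≤ j → 0 ≤ a i * a (j - δ) - a (i - δ) * a j ∧
      0 ≤ b (x - i) * b (z - j) - b (x - j) * b (z - i) := fun i j hij =>
    ⟨sub_nonneg.2 (ha.mul_le_mul_of_add_eq (by ring) (by omega) (by omega)),
      sub_nonneg.2 (hb.mul_le_mul_of_add_eq (by omega) (by omega) (by omega))⟩
  have terms_nonneg : ∀ i j, 0 ≤ (a i * a (j - δ) - a (i - δ) * a j) *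
      (b (x - i) * b (z - j) - b (x - j) * b (z - i)) := by
    intro i j
    rcases le_total i j with hij | hji
    · exact mul_nonneg (minors_nonneg i j hij).1 (minors_nonneg i j hij).2
    · have := mul_nonneg (minors_nonneg j i hji).1 (minors_nonneg j i hji).2
      linarith
  have binet := two_mul_sum_mul_sum_sub_sum_mul_sum t a (fun k => a (k - δ))
    (fun k => b (x - k)) (fun k => b (z - k))
  have hw : w + δ = x := by omega
  have hy : y + δ = z := by omega
  simp only
  rw [extend x, extend z, shift w, shift y, hw, hy]
  have := sum_nonneg fun i (_ : i ∈ t) => sum_nonneg fun j (_ : j ∈ t) => terms_nonneg i j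
  linarith

theorem Set.OrdConnected.isLogConcave_indicator_one {s : Set ℤ} (hs : s.OrdConnected) :
    IsLogConcave (s.indicator (1 : ℤ → R)) := by
  intro w x y z _ hwx hxy hyz
  by_cases hwz : w ∈ s ∧ z ∈ s
  · have hx : x ∈ s := hs.out hwz.1 hwz.2 ⟨hwx, hxy.trans hyz⟩
    have hy : y ∈ s := hs.out hwz.1 hwz.2 ⟨hwx.trans hxy, hyz⟩
    simp [hwz.1, hwz.2, hx, hy]
  · have : s.indicator 1 w * s.indicator (1 : ℤ → R) z = 0 := by
      rcases not_and_or.1 hwz with h | h <;> simp [h]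
    rw [this]
    exact mul_nonneg (indicator_nonneg (fun _ _ => zero_le_one) _)
      (indicator_nonneg (fun _ _ => zero_le_one) _)

theorem LaurentPolynomial.isLogConcave_coeff_mul {f g : R[T;T⁻¹]} (hf : IsLogConcave f.coeff)
    (hg : IsLogConcave g.coeff) : IsLogConcave (f * g).coeff := by
  have : ⇑(f * g).coeff = fun x => ∑ k ∈ f.coeff.support, f.coeff k * g.coeff (x - k) := by
    ext x
    rw [AddMonoidAlgebra.coeff_mul_apply_left, Finsupp.sum]
    simp [neg_add_eq_sub]
  rw [this]
  exact hf.convolution _ (fun k hk => Finsupp.notMem_support_iff.1 hk) hg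

theorem LaurentPolynomial.isLogConcave_coeff_pow {f : R[T;T⁻¹]} (hf : IsLogConcave f.coeff)
    (n : ℕ) : IsLogConcave (f ^ n).coeff := by
  induction n with
  | zero =>
    rw [pow_zero, coeff_one_eq_indicator]
    exact Set.ordConnected_singleton.isLogConcave_indicator_one
  | succ n ih => rw [pow_succ]; exact isLogConcave_coeff_mul ih hf

end LogConcave

theorem Polynomial.coeff_toLaurent_natCast [Semiring R] (f : R[X]) (n : ℕ) :
    (toLaurent f).coeff n = f.coeff n := by
  rw [coeff_toLaurent]
  exact Finsupp.mapDomain_apply Nat.castEmbedding.injective _ n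

theorem Polynomial.coeff_toLaurent_of_neg [Semiring R] (f : R[X]) {i : ℤ} (hi : i < 0) :
    (toLaurent f).coeff i = 0 := by
  rw [coeff_toLaurent]
  exact Finsupp.mapDomain_of_notMem_range _ _ (by rintro ⟨n, rfl⟩; simp at hi; omega)

theorem Polynomial.coeff_sum_range_X_pow [Semiring R] (d n : ℕ) :
    (∑ i ∈ range (d + 1), (X : R[X]) ^ i).coeff n = if n ≤ d then 1 else 0 := by
  simp [coeff_X_pow]

theorem Polynomial.coeff_toLaurent_sum_range_X_pow [Semiring R] (d : ℕ) :
    ⇑(toLaurent (∑ i ∈ range (d + 1), (X : R[X]) ^ i)).coeff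
      = (Set.Icc 0 (d : ℤ)).indicator 1 := by
  ext j
  rcases lt_or_ge j 0 with hj | hj
  · rw [coeff_toLaurent_of_neg _ hj, Set.indicator_of_notMem (by simp [hj])]
  · lift j to ℕ using hj
    rw [coeff_toLaurent_natCast, coeff_sum_range_X_pow]
    simp [Set.indicator]

section Nonneg

variable [Semiring R] [PartialOrder R] [IsOrderedRing R] {P Q : R[X]}

theorem Polynomial.coeff_mul_nonneg (hP : ∀ n, 0 ≤ P.coeff n) (hQ : ∀ n, 0 ≤ Q.coeff n)
    (n : ℕ) : 0 ≤ (P * Q).coeff n := by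
  rw [coeff_mul]
  exact sum_nonneg fun _ _ => mul_nonneg (hP _) (hQ _)

theorem Polynomial.coeff_pow_nonneg (hP : ∀ n, 0 ≤ P.coeff n) (m n : ℕ) :
    0 ≤ (P ^ m).coeff n := by
  induction m generalizing n with
  | zero => rw [pow_zero, coeff_one]; split_ifs <;> simp
  | succ m ih => rw [pow_succ]; exact coeff_mul_nonneg ih hP n

theorem Polynomial.coeff_mul_coeff_le_coeff_mul (hP : ∀ n, 0 ≤ P.coeff n)
    (hQ : ∀ n, 0 ≤ Q.coeff n) (i j : ℕ) :
    P.coeff i * Q.coeff j ≤ (P * Q).coeff (i + j) := by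
  rw [coeff_mul]
  exact single_le_sum (f := fun x => P.coeff x.1 * Q.coeff x.2)
    (fun _ _ => mul_nonneg (hP _) (hQ _))
    (mem_antidiagonal.2 rfl : (i, j) ∈ antidiagonal (i + j))

end Nonneg

theorem Polynomial.coeff_sum_range_X_pow_pow_pos [Semiring R] [PartialOrder R]
    [IsStrictOrderedRing R] (d n : ℕ) {k : ℕ} (hk : k ≤ d * n) :
    0 < ((∑ i ∈ range (d + 1), (X : R[X]) ^ i) ^ n).coeff k := by
  have hS : ∀ m, 0 ≤ (∑ i ∈ range (d + 1), (X : R[X]) ^ i).coeff m := fun m => by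
    rw [coeff_sum_range_X_pow]; split_ifs <;> simp
  induction n generalizing k with
  | zero =>
    obtain rfl : k = 0 := by simpa using hk
    simp
  | succ n ih =>
    obtain ⟨i, j, rfl, hi, hj⟩ : ∃ i j, k = i + j ∧ i ≤ d ∧ j ≤ d * n :=
      ⟨min k d, k - min k d, by omega, min_le_right _ _, by rw [mul_add_one] at hk; omega⟩
    rw [pow_succ']
    calc 0 < (∑ i ∈ range (d + 1), (X : R[X]) ^ i).coeff i * _ := by
          rw [coeff_sum_range_X_pow, if_pos hi, one_mul]; exact ih hj
      _ ≤ _ := coeff_mul_coeff_le_coeff_mul hS (coeff_pow_nonneg hS n) i j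

theorem Polynomial.coeff_eq_of_forall_eval_eq [CommRing R] [IsDomain R] [Infinite R] {P : R[X]}
    {N : ℕ} {a : ℕ → R} (h : ∀ t, P.eval t = ∑ k ∈ range N, a k * t ^ k) {k : ℕ}
    (hk : k < N) : P.coeff k = a k := by
  have : P = ∑ k ∈ range N, C (a k) * X ^ k :=
    Polynomial.funext fun t => by simp [h, eval_finsetSum]
  simp [this, finsetSum_coeff, hk]

theorem stmt5_general (d p : ℕ) (a : ℕ → ℝ)
    (ha : ∀ t : ℝ, (∑ i ∈ Finset.range (d + 1), t ^ i) ^ p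
      = ∑ k ∈ Finset.range (d * p + 1), a k * t ^ k) :
    (∀ k ≤ d * p, 0 < a k) ∧
    (∀ k : ℕ, 1 ≤ k → k ≤ d * p - 1 → a (k - 1) * a (k + 1) ≤ a k ^ 2) := by
  set S : ℝ[X] := ∑ i ∈ range (d + 1), X ^ i
  have hcoeff : ∀ k ≤ d * p, (S ^ p).coeff k = a k := fun k hk =>
    coeff_eq_of_forall_eval_eq (fun t => by simp [S, eval_finsetSum, ha t])
      (Nat.lt_succ_of_le hk)
  have hlc : IsLogConcave (toLaurent (S ^ p)).coeff := by
    rw [map_pow]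
    apply isLogConcave_coeff_pow
    rw [coeff_toLaurent_sum_range_X_pow]
    exact Set.ordConnected_Icc.isLogConcave_indicator_one
  refine ⟨fun k hk => hcoeff k hk ▸ coeff_sum_range_X_pow_pow_pos d p hk,
    fun k hk₁ hk₂ => ?_⟩
  obtain ⟨j, rfl⟩ : ∃ j, k = j + 1 := ⟨k - 1, by omega⟩
  rw [← hcoeff _ (by omega), ← hcoeff _ (by omega), ← hcoeff _ (by omega)]
  have := hlc.mul_le_sq (j + 1)
  rw [add_sub_cancel_right, ← Nat.cast_succ, ← Nat.cast_succ, coeff_toLaurent_natCast,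
    coeff_toLaurent_natCast, coeff_toLaurent_natCast] at this
  rwa [Nat.add_sub_cancel]

/-- The coefficients of `(1+T+⋯+T^d)^p` are positive (hence no internal zeros)
and log-concave. -/
theorem stmt5 (d p : ℕ) (hd : 1 ≤ d) (hp : 1 ≤ p) (a : ℕ → ℝ)
    (ha : ∀ t : ℝ, (∑ i ∈ Finset.range (d + 1), t ^ i) ^ p
      = ∑ k ∈ Finset.range (d * p + 1), a k * t ^ k) :
    (∀ k ≤ d * p, 0 < a k) ∧
    (∀ k : ℕ, 1 ≤ k → k ≤ d * p - 1 → a (k - 1) * a (k + 1) ≤ a k ^ 2) :=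
  stmt5_general d p a ha
end

section
/- Let f(z) = Σ_k a_k z^k be a polynomial of degree D with real coefficients. Then f(z)f(w) = Σ_{r=0}^{2D} Σ_{i=⌈r/2⌉}^{r} (a_i a_{r−i} − a_{i+1} a_{r−i−1}) S_{(i, r−i)}(z,w), where S_{(λ₁,λ₂)}(z,w) = Σ_{k=λ₂}^{λ₁} z^{λ₁+λ₂−k}w^k and a_k = 0 for k < 0 or k > D. -/
/-!
Put `b_r(i) = a_i a_{r-i}`. The coefficient of `z^{r-k} w^k` on the right-hand side is the
telescoping sum `∑_{max(k, r-k) ≤ i ≤ r} (b_r(i) - b_r(i+1)) = b_r(max(k, r-k))`, since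
`b_r(r+1) = a_{r+1} a_{-1} = 0`; by the symmetry `b_r(i) = b_r(r-i)` this is `a_k a_{r-k}`,
the coefficient of `z^{r-k} w^k` in the Cauchy product `f(z) f(w)`.
-/

open Finset

theorem sum_range_mul_sum_range_eq_sum_range_antidiag {R : Type*} [NonUnitalNonAssocSemiring R]
    (D : ℕ) (f g : ℕ → R) (hf : ∀ i, D < i → f i = 0) (hg : ∀ j, D < j → g j = 0) :
    (∑ i ∈ range (D + 1), f i) * ∑ j ∈ range (D + 1), g j
      = ∑ r ∈ range (2 * D + 1), ∑ k ∈ range (r + 1), f k * g (r - k) := by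
  rw [sum_range_diag_flip _ fun i j => f i * g j, sum_mul_sum]
  refine sum_subset_zero_on_sdiff (range_subset_range.2 (by omega)) ?_ ?_
  · intro i hi
    simp only [mem_sdiff, mem_range] at hi
    simp [hf i (by omega)]
  · intro i hi
    rw [mem_range] at hi
    refine sum_subset (range_subset_range.2 (by omega)) fun j hj hj' => ?_
    simp only [mem_range] at hj hj'
    simp [hg j (by omega)]

theorem sum_Icc_sub_mul_sum_Icc_eq_sum_range {R : Type*} [NonUnitalNonAssocRing R] (r : ℕ)
    (b x : ℕ → R) (hb : ∀ k ≤ r, b (r - k) = b k) (hr : b (r + 1) = 0) :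
    ∑ i ∈ Icc ((r + 1) / 2) r, (b i - b (i + 1)) * ∑ k ∈ Icc (r - i) i, x k
      = ∑ k ∈ range (r + 1), b k * x k := by
  simp_rw [mul_sum]
  rw [sum_comm' (t' := range (r + 1)) (s' := fun k => Icc (max k (r - k)) r)
    (by intro i k; simp only [mem_Icc, mem_range]; omega)]
  refine sum_congr rfl fun k hk => ?_
  rw [mem_range] at hk
  have telescope : ∑ i ∈ Icc (max k (r - k)) r, (b i - b (i + 1)) = b (max k (r - k)) := by
    rw [← neg_neg (∑ i ∈ _, _), ← sum_neg_distrib]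
    simp_rw [neg_sub]
    rw [sum_Icc_sub (by omega), neg_sub, hr, sub_zero]
  rw [← sum_mul, telescope]
  rcases le_total (r - k) k with h | h
  · rw [max_eq_left h]
  · rw [max_eq_right h, hb k (by omega)]

theorem stmt7_general (D : ℕ) (a : ℤ → ℝ)
    (ha : ∀ k : ℤ, k < 0 ∨ (D : ℤ) < k → a k = 0) :
    ∀ z w : ℝ,
      (∑ k ∈ Finset.range (D + 1), a k * z ^ k) *
        (∑ k ∈ Finset.range (D + 1), a k * w ^ k)
      = ∑ r ∈ Finset.range (2 * D + 1), ∑ i ∈ Finset.Icc ((r + 1) / 2) r,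
          (a i * a ((r : ℤ) - i) - a ((i : ℤ) + 1) * a ((r : ℤ) - i - 1)) *
            ∑ k ∈ Finset.Icc (r - i) i, z ^ (r - k) * w ^ k := by
  intro z w
  have hvanish (y : ℝ) (i : ℕ) (hi : D < i) : a i * y ^ i = 0 := by
    rw [ha i (Or.inr (by exact_mod_cast hi)), zero_mul]
  rw [mul_comm, sum_range_mul_sum_range_eq_sum_range_antidiag D _ _ (hvanish w) (hvanish z)]
  refine sum_congr rfl fun r _ => ?_
  set b : ℕ → ℝ := fun i => a i * a ((r : ℤ) - i)
  have hb : ∀ k ≤ r, b (r - k) = b k := by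
    intro k hk
    simp only [b, Nat.cast_sub hk, sub_sub_cancel, mul_comm]
  have hr : b (r + 1) = 0 := by
    simp only [b]
    rw [ha ((r : ℤ) - (r + 1 : ℕ)) (Or.inl (by omega)), mul_zero]
  have hcoeff (i : ℕ) :
      a i * a ((r : ℤ) - i) - a ((i : ℤ) + 1) * a ((r : ℤ) - i - 1) = b i - b (i + 1) := by
    simp only [b, Nat.cast_succ, sub_add_eq_sub_sub]
  simp only [hcoeff, sum_Icc_sub_mul_sum_Icc_eq_sum_range r b _ hb hr]
  refine sum_congr rfl fun k hk => ?_
  have hkr : k ≤ r := Nat.lt_succ_iff.1 (mem_range.1 hk)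
  simp only [b, Nat.cast_sub hkr]
  ring

/-- Expansion of `f(z)f(w)` in the two-variable Schur basis:
`f(z)f(w) = ∑_{r=0}^{2D} ∑_{i=⌈r/2⌉}^{r} (a_i a_{r−i} − a_{i+1} a_{r−i−1}) S_{(i,r−i)}(z,w)`,
where `a_k = 0` for `k < 0` or `k > D`, and
`S_{(i,r−i)}(z,w) = ∑_{k=r−i}^{i} z^{r−k} w^k`. -/
theorem stmt7 (D : ℕ) (a : ℤ → ℝ) (haD : a (D : ℤ) ≠ 0)
    (ha : ∀ k : ℤ, k < 0 ∨ (D : ℤ) < k → a k = 0) :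
    ∀ z w : ℝ,
      (∑ k ∈ Finset.range (D + 1), a k * z ^ k) *
        (∑ k ∈ Finset.range (D + 1), a k * w ^ k)
      = ∑ r ∈ Finset.range (2 * D + 1), ∑ i ∈ Finset.Icc ((r + 1) / 2) r,
          (a i * a ((r : ℤ) - i) - a ((i : ℤ) + 1) * a ((r : ℤ) - i - 1)) *
            ∑ k ∈ Finset.Icc (r - i) i, z ^ (r - k) * w ^ k :=
  stmt7_general D a ha
end
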